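/- arXiv:1308.1700 — 2 statements merged into one kernel-verified Lean document; each statement's English description precedes it below -/
import Mathlib

section
/- For positive integers m, n, k with n ≥ 2 and k ≥ m, the number C_m(n,k) of k-colourings of the graph nK_m (disjoint union of n copies of the complete graph K_m) satisfies C_m(n,k) = Σ_{i=0}^{m} C(m,i) · (k−i)_{m−i} · C_m(n−1, k−i), where (x)_j denotes the falling factorial x(x−1)⋯(x−j+1) and C(m,i) is the binomial coefficient. -/
open Finset

/-- The disjoint union of `n` copies of the complete graph `K_m`, on vertex set `Fin n × Fin m`. -/
def cliqueUnion (n m : ℕ) : SimpleGraph (Fin n × Fin m) where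
  Adj x y := x.1 = y.1 ∧ x.2 ≠ y.2
  symm := ⟨fun _ _ h => ⟨h.1.symm, h.2.symm⟩⟩
  loopless := ⟨fun _ h => h.2 rfl⟩

/-- A finpartition of the vertex set is a colouring when every part is a stable set. -/
def IsColouring {V : Type*} [Fintype V] [DecidableEq V] (G : SimpleGraph V)
    (P : Finpartition (univ : Finset V)) : Prop :=
  ∀ p ∈ P.parts, ∀ x ∈ p, ∀ y ∈ p, ¬ G.Adj x y

/-- The number of `k`-colourings of `G` (partitions into exactly `k` nonempty stable sets). -/
noncomputable def numColourings {V : Type*} [Fintype V] [DecidableEq V] (G : SimpleGraph V) (k : ℕ) : ℕ :=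
  Nat.card {P : Finpartition (univ : Finset V) // P.parts.card = k ∧ IsColouring G P}

/-- The total number of colourings of `G`. -/
noncomputable def totalColourings {V : Type*} [Fintype V] [DecidableEq V] (G : SimpleGraph V) : ℕ :=
  Nat.card {P : Finpartition (univ : Finset V) // IsColouring G P}

/-!
Write `n K_m` as `G ⊕g ⊤` with `G = (n - 1) K_m` and `⊤` the complete graph on a set `α` of `m`
vertices. In a colouring of `G ⊕g ⊤` the clique vertices lie in distinct classes; let `s`,
`#s = i`, be those forming a class on their own. Deleting the clique leaves a `(k - i)`-colouring
`Q` of `G`, and the other `m - i` clique vertices join pairwise distinct classes of `Q`.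
Conversely `s`, `Q` and an injection of `α \ s` into the classes of `Q` determine the colouring,
so each `(k - i)`-colouring of `G` extends in `C(m, i) · (k - i)_{m - i}` ways.
-/

namespace Finpartition

variable {W β : Type*} [Fintype W] [DecidableEq W]

lemma parts_eq_image_part (P : Finpartition (univ : Finset W)) : P.parts = univ.image P.part := by
  ext p
  simp only [mem_image, mem_univ, true_and]
  refine ⟨fun hp => ?_, ?_⟩
  · obtain ⟨x, hx⟩ := P.nonempty_of_mem_parts hp
    exact ⟨x, P.part_eq_of_mem hp hx⟩
  · rintro ⟨x, rfl⟩
    exact P.part_mem.2 (mem_univ x)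

lemma part_eq_part_iff (P : Finpartition (univ : Finset W)) {x y : W} :
    P.part x = P.part y ↔ x ∈ P.part y :=
  (P.mem_part_iff_part_eq_part (mem_univ x) (mem_univ y)).symm

lemma ext_part {P Q : Finpartition (univ : Finset W)} (h : P.part = Q.part) : P = Q := by
  ext1
  rw [parts_eq_image_part, parts_eq_image_part, h]

variable [DecidableEq β]

def ker (f : W → β) : Finpartition (univ : Finset W) :=
  @ofSetoid W _ _ (Setoid.ker f) (fun x y => decEq (f x) (f y))

lemma mem_part_ker {f : W → β} {x y : W} : y ∈ (ker f).part x ↔ f y = f x := by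
  rw [ker, mem_part_ofSetoid_iff_rel, Setoid.ker_def, eq_comm]

lemma part_ker_eq_part_ker {f : W → β} {x y : W} :
    (ker f).part x = (ker f).part y ↔ f x = f y := by
  rw [part_eq_part_iff, mem_part_ker]

lemma ker_eq_of_part_eq_part_iff {f : W → β} {P : Finpartition (univ : Finset W)}
    (h : ∀ x y, f x = f y ↔ P.part x = P.part y) : ker f = P := by
  refine ext_part (funext fun x => Finset.ext fun y => ?_)
  rw [mem_part_ker, h, part_eq_part_iff]

lemma card_parts_ker (f : W → β) : #(ker f).parts = #(univ.image f) := by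
  have hpart : (ker f).part = (fun b => univ.filter (f · = b)) ∘ f := by
    ext x y
    simp [mem_part_ker]
  rw [parts_eq_image_part, hpart, ← image_image]
  refine card_image_of_injOn fun b hb c _ hbc => ?_
  obtain ⟨x, -, rfl⟩ := mem_image.1 hb
  simpa using (Finset.ext_iff.1 hbc x).1 (by simp)

end Finpartition

section Colouring

open Finpartition

variable {V V' : Type*} [Fintype V] [DecidableEq V] [Fintype V'] [DecidableEq V']
  {G : SimpleGraph V} {G' : SimpleGraph V'} {k : ℕ}

lemma IsColouring.part_ne {P : Finpartition (univ : Finset V)} (hP : IsColouring G P) {x y : V}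
    (hxy : G.Adj x y) : P.part x ≠ P.part y := fun h =>
  hP _ (P.part_mem.2 (mem_univ x)) x (P.mem_part (mem_univ x)) y
    (h ▸ P.mem_part (mem_univ y)) hxy

lemma isColouring_ker {β : Type*} [DecidableEq β] {f : V → β}
    (hf : ∀ x y, G.Adj x y → f x ≠ f y) : IsColouring G (ker f) := by
  intro p hp x hx y hy hxy
  obtain ⟨z, -, rfl⟩ := mem_image.1 ((ker f).parts_eq_image_part ▸ hp)
  exact hf x y hxy ((mem_part_ker.1 hx).trans (mem_part_ker.1 hy).symm)

abbrev KColouring (G : SimpleGraph V) (k : ℕ) : Type _ :=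
  {P : Finpartition (univ : Finset V) // #P.parts = k ∧ IsColouring G P}

lemma numColourings_eq_card_kColouring (G : SimpleGraph V) (k : ℕ) :
    numColourings G k = Nat.card (KColouring G k) := rfl

def KColouring.map (e : G ≃g G') (P : KColouring G k) : KColouring G' k :=
  ⟨ker (P.1.part ∘ e.symm),
    by rw [card_parts_ker, ← image_image, image_univ_of_surjective e.symm.surjective,
      ← parts_eq_image_part, P.2.1],
    isColouring_ker fun _ _ h => P.2.2.part_ne (e.symm.map_adj_iff.2 h)⟩

lemma KColouring.map_symm_map (e : G ≃g G') (P : KColouring G k) : (P.map e).map e.symm = P :=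
  Subtype.ext <| ker_eq_of_part_eq_part_iff fun x y => by
    simp [KColouring.map, part_ker_eq_part_ker]

lemma numColourings_congr (e : G ≃g G') : numColourings G k = numColourings G' k :=
  Nat.card_congr ⟨KColouring.map e, KColouring.map e.symm, KColouring.map_symm_map e,
    KColouring.map_symm_map e.symm⟩

end Colouring

section SumClique

open Finpartition Sum

variable {V : Type*} [Fintype V] [DecidableEq V] {G : SimpleGraph V}
  {α : Type*} [Fintype α] [DecidableEq α] {k : ℕ}

def Finset.leftOrRight (p : Finset (V ⊕ α)) : Finset V ⊕ Finset α :=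
  if p.toLeft = ∅ then inr p.toRight else inl p.toLeft

namespace Finpartition

variable (P : Finpartition (univ : Finset (V ⊕ α)))

lemma mem_toLeft_part {x : V ⊕ α} {w : V} :
    w ∈ (P.part x).toLeft ↔ P.part (inl w) = P.part x := by
  rw [mem_toLeft, part_eq_part_iff]

lemma eq_of_toLeft_eq {p q : Finset (V ⊕ α)} (hp : p ∈ P.parts) (hq : q ∈ P.parts)
    (hpq : p.toLeft = q.toLeft) (hne : p.toLeft ≠ ∅) : p = q := by
  obtain ⟨w, hw⟩ := nonempty_iff_ne_empty.2 hne
  exact P.eq_of_mem_parts hp hq (mem_toLeft.1 hw) (mem_toLeft.1 (hpq ▸ hw))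

lemma injOn_leftOrRight : Set.InjOn Finset.leftOrRight (P.parts : Set (Finset (V ⊕ α))) := by
  intro p hp q hq h
  unfold Finset.leftOrRight at h
  split_ifs at h with hpl hql hql
  · rw [← toLeft_disjSum_toRight (u := p), ← toLeft_disjSum_toRight (u := q), hpl, hql,
      inr_injective h]
  · exact P.eq_of_toLeft_eq hp hq (inl_injective h) hpl

def restrictLeft : Finpartition (univ : Finset V) := ker (P.part ∘ inl)

/-- For a colouring of `G ⊕g ⊤` these are the clique vertices forming a colour class alone. -/
def rightOnly : Finset α := univ.filter fun a => (P.part (inr a)).toLeft = ∅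

lemma part_restrictLeft (v : V) : P.restrictLeft.part v = (P.part (inl v)).toLeft := by
  ext w
  rw [restrictLeft, mem_part_ker, mem_toLeft_part, Function.comp_apply, Function.comp_apply]

lemma exists_part_inl_eq_part_inr {a : α} (ha : a ∉ P.rightOnly) :
    ∃ v, P.part (inl v) = P.part (inr a) := by
  simp only [rightOnly, mem_filter, mem_univ, true_and, ← ne_eq, ← nonempty_iff_ne_empty] at ha
  obtain ⟨v, hv⟩ := ha
  exact ⟨v, P.mem_toLeft_part.1 hv⟩

lemma toLeft_part_inr_mem_parts {a : α} (ha : a ∉ P.rightOnly) :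
    (P.part (inr a)).toLeft ∈ P.restrictLeft.parts := by
  obtain ⟨v, hv⟩ := P.exists_part_inl_eq_part_inr ha
  rw [← hv, ← part_restrictLeft]
  exact P.restrictLeft.part_mem.2 (mem_univ v)

end Finpartition

namespace IsColouring

variable {P : Finpartition (univ : Finset (V ⊕ α))}

lemma part_inr_injective (hP : IsColouring (G ⊕g ⊤) P) :
    Function.Injective (P.part ∘ inr) := by
  intro a b h
  by_contra hab
  exact hP.part_ne (by simpa using hab) h

lemma toRight_part_inr (hP : IsColouring (G ⊕g ⊤) P) (a : α) :
    (P.part (inr a)).toRight = {a} := by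
  ext b
  rw [mem_toRight, ← part_eq_part_iff, mem_singleton]
  exact hP.part_inr_injective.eq_iff

lemma injOn_toLeft_part_inr (hP : IsColouring (G ⊕g ⊤) P) :
    Set.InjOn (fun a => (P.part (inr a)).toLeft) (P.rightOnlyᶜ : Finset α) := fun a ha _ _ h =>
  hP.part_inr_injective <| P.eq_of_toLeft_eq (P.part_mem.2 (mem_univ _))
    (P.part_mem.2 (mem_univ _)) h (by simpa [rightOnly] using ha)

lemma card_parts_eq_add (hP : IsColouring (G ⊕g ⊤) P) :
    #P.parts = #P.restrictLeft.parts + #P.rightOnly := by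
  have hsplit : univ.image P.part =
      univ.image (P.part ∘ inl) ∪ P.rightOnly.image (P.part ∘ inr) := by
    ext p
    simp only [mem_union, mem_image, mem_univ, true_and, Function.comp_apply]
    constructor
    · rintro ⟨v | a, rfl⟩
      · exact .inl ⟨v, rfl⟩
      · by_cases ha : a ∈ P.rightOnly
        · exact .inr ⟨a, ha, rfl⟩
        · exact .inl (P.exists_part_inl_eq_part_inr ha)
    · rintro (⟨x, rfl⟩ | ⟨x, -, rfl⟩) <;> exact ⟨_, rfl⟩
  have hdisj : Disjoint (univ.image (P.part ∘ inl)) (P.rightOnly.image (P.part ∘ inr)) := by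
    simp only [disjoint_left, mem_image, mem_univ, true_and, not_exists, not_and,
      Function.comp_apply]
    rintro p ⟨v, rfl⟩ a ha h
    have : v ∈ (P.part (inr a)).toLeft := P.mem_toLeft_part.2 h.symm
    simp_all [rightOnly]
  rw [parts_eq_image_part, hsplit, card_union_of_disjoint hdisj,
    card_image_of_injective _ hP.part_inr_injective, restrictLeft, card_parts_ker]

end IsColouring

abbrev CliqueExtension (G : SimpleGraph V) (α : Type*) [Fintype α] [DecidableEq α] (k : ℕ) :
    Type _ :=
  Σ s : Finset α, Σ Q : KColouring G (k - #s), ((sᶜ : Finset α) ↪ Q.1.parts)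

def KColouring.toCliqueExtension (P : KColouring (G ⊕g (⊤ : SimpleGraph α)) k) :
    CliqueExtension G α k :=
  ⟨P.1.rightOnly,
    ⟨P.1.restrictLeft, by have := P.2.2.card_parts_eq_add; omega,
      isColouring_ker fun _ _ h => P.2.2.part_ne (by simpa using h)⟩,
    ⟨fun a => ⟨(P.1.part (inr a)).toLeft, P.1.toLeft_part_inr_mem_parts (mem_compl.1 a.2)⟩,
      fun a b h => Subtype.ext <| P.2.2.injOn_toLeft_part_inr a.2 b.2 (congrArg Subtype.val h)⟩⟩

namespace CliqueExtension

def label (t : CliqueExtension G α k) : V ⊕ α → Finset V ⊕ Finset α :=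
  Sum.elim (fun v => inl (t.2.1.1.part v))
    fun a => if h : a ∈ t.1 then inr {a} else inl (t.2.2 ⟨a, mem_compl.2 h⟩)

section

variable (t : CliqueExtension G α k)

lemma label_inl (v : V) : t.label (inl v) = inl (t.2.1.1.part v) := rfl

lemma label_inr_of_mem {a : α} (ha : a ∈ t.1) : t.label (inr a) = inr {a} := dif_pos ha

lemma label_inr_of_mem_compl {a : α} (ha : a ∈ t.1ᶜ) :
    t.label (inr a) = inl (t.2.2 ⟨a, ha⟩ : Finset V) := dif_neg (mem_compl.1 ha)

lemma image_label : univ.image t.label = t.2.1.1.parts.disjSum (t.1.image singleton) := by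
  ext (q | r)
  · simp only [inl_mem_disjSum, mem_image, mem_univ, true_and]
    constructor
    · rintro ⟨v | a, h⟩
      · exact inl_injective h ▸ t.2.1.1.part_mem.2 (mem_univ v)
      · by_cases ha : a ∈ t.1
        · simp [label_inr_of_mem t ha] at h
        · rw [label_inr_of_mem_compl t (mem_compl.2 ha)] at h
          exact inl_injective h ▸ (t.2.2 _).2
    · intro hq
      obtain ⟨v, hv⟩ := t.2.1.1.nonempty_of_mem_parts hq
      exact ⟨inl v, by rw [label_inl, t.2.1.1.part_eq_of_mem hq hv]⟩
  · simp only [inr_mem_disjSum, mem_image, mem_univ, true_and]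
    constructor
    · rintro ⟨v | a, h⟩
      · simp [label_inl] at h
      · by_cases ha : a ∈ t.1
        · exact ⟨a, ha, inr_injective (label_inr_of_mem t ha ▸ h)⟩
        · simp [label_inr_of_mem_compl t (mem_compl.2 ha)] at h
    · rintro ⟨a, ha, rfl⟩
      exact ⟨inr a, label_inr_of_mem t ha⟩

lemma label_inr_injective : Function.Injective (t.label ∘ inr) := by
  intro a b h
  simp only [Function.comp_apply] at h
  by_cases ha : a ∈ t.1 <;> by_cases hb : b ∈ t.1
  · rw [label_inr_of_mem t ha, label_inr_of_mem t hb] at h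
    exact singleton_injective (inr_injective h)
  · simp [label_inr_of_mem t ha, label_inr_of_mem_compl t (mem_compl.2 hb)] at h
  · simp [label_inr_of_mem_compl t (mem_compl.2 ha), label_inr_of_mem t hb] at h
  · rw [label_inr_of_mem_compl t (mem_compl.2 ha), label_inr_of_mem_compl t (mem_compl.2 hb)] at h
    exact congrArg Subtype.val (t.2.2.injective (Subtype.ext (inl_injective h)))

lemma label_ne_of_adj {x y : V ⊕ α} (h : (G ⊕g ⊤).Adj x y) : t.label x ≠ t.label y := by
  rcases x with v | a <;> rcases y with w | b
  · exact fun hvw => t.2.1.2.2.part_ne (by simpa using h) (inl_injective hvw)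
  · simp at h
  · simp at h
  · exact (label_inr_injective t).ne (by simpa using h)

lemma mem_toLeft_part_ker_label {x : V ⊕ α} {w : V} :
    w ∈ ((ker t.label).part x).toLeft ↔ t.label (inl w) = t.label x := by
  rw [mem_toLeft, mem_part_ker]

lemma toLeft_part_ker_label_inr_of_mem_compl {a : α} (ha : a ∈ t.1ᶜ) :
    ((ker t.label).part (inr a)).toLeft = t.2.2 ⟨a, ha⟩ := by
  ext w
  rw [mem_toLeft_part_ker_label, label_inl, label_inr_of_mem_compl t ha, inl.injEq,
    t.2.1.1.part_eq_iff_mem (t.2.2 _).2]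

lemma rightOnly_ker_label : (ker t.label).rightOnly = t.1 := by
  ext a
  simp only [rightOnly, mem_filter, mem_univ, true_and]
  by_cases ha : a ∈ t.1
  · simp only [ha, iff_true, eq_empty_iff_forall_notMem, mem_toLeft_part_ker_label, label_inl,
      label_inr_of_mem t ha]
    simp
  · rw [toLeft_part_ker_label_inr_of_mem_compl t (mem_compl.2 ha)]
    simpa [ha] using t.2.1.1.ne_empty (t.2.2 _).2

lemma restrictLeft_ker_label : (ker t.label).restrictLeft = t.2.1.1 :=
  ker_eq_of_part_eq_part_iff fun v w => by
    rw [Function.comp_apply, Function.comp_apply, part_ker_eq_part_ker, label_inl, label_inl,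
      inl.injEq]

end

def toKColouring (hk : Fintype.card α ≤ k) (t : CliqueExtension G α k) :
    KColouring (G ⊕g (⊤ : SimpleGraph α)) k :=
  ⟨ker t.label, by
    rw [card_parts_ker, image_label, card_disjSum, card_image_of_injective _ singleton_injective,
      t.2.1.2.1]
    have := t.1.card_le_univ
    omega,
    isColouring_ker fun _ _ => t.label_ne_of_adj⟩

lemma toKColouring_injective (hk : Fintype.card α ≤ k) :
    Function.Injective (toKColouring (G := G) hk) := by
  rintro ⟨s, Q, g⟩ ⟨s', Q', g'⟩ h
  have h : ker (label ⟨s, Q, g⟩) = ker (label ⟨s', Q', g'⟩) := congrArg Subtype.val h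
  obtain rfl : s = s' :=
    (rightOnly_ker_label ⟨s, Q, g⟩).symm.trans (h ▸ rightOnly_ker_label ⟨s', Q', g'⟩)
  obtain rfl : Q = Q' := Subtype.ext <| by
    rw [← restrictLeft_ker_label ⟨s, Q, g⟩, h, restrictLeft_ker_label]
  obtain rfl : g = g' := Function.Embedding.ext fun a => Subtype.ext <| by
    rw [← toLeft_part_ker_label_inr_of_mem_compl ⟨s, Q, g⟩ a.2, h,
      toLeft_part_ker_label_inr_of_mem_compl]
  rfl

end CliqueExtension

lemma KColouring.label_toCliqueExtension (P : KColouring (G ⊕g (⊤ : SimpleGraph α)) k) :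
    P.toCliqueExtension.label = leftOrRight ∘ P.1.part := by
  funext x
  rcases x with v | a
  · have hv : v ∈ (P.1.part (inl v)).toLeft := P.1.mem_toLeft_part.2 rfl
    rw [CliqueExtension.label_inl, Function.comp_apply, leftOrRight,
      if_neg (ne_empty_of_mem hv)]
    exact congrArg inl (P.1.part_restrictLeft v)
  · have hiff : a ∈ P.1.rightOnly ↔ (P.1.part (inr a)).toLeft = ∅ := by simp [rightOnly]
    rw [Function.comp_apply, leftOrRight]
    by_cases ha : a ∈ P.1.rightOnly
    · rw [CliqueExtension.label_inr_of_mem _ ha, if_pos (hiff.1 ha), P.2.2.toRight_part_inr a]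
    · rw [CliqueExtension.label_inr_of_mem_compl _ (mem_compl.2 ha), if_neg (hiff.not.1 ha)]
      rfl

lemma KColouring.toKColouring_toCliqueExtension (hk : Fintype.card α ≤ k)
    (P : KColouring (G ⊕g (⊤ : SimpleGraph α)) k) : P.toCliqueExtension.toKColouring hk = P :=
  Subtype.ext <| ker_eq_of_part_eq_part_iff fun x y => by
    rw [label_toCliqueExtension, Function.comp_apply, Function.comp_apply]
    exact (injOn_leftOrRight P.1).eq_iff (P.1.part_mem.2 (mem_univ x)) (P.1.part_mem.2 (mem_univ y))

lemma CliqueExtension.toKColouring_bijective (hk : Fintype.card α ≤ k) :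
    Function.Bijective (toKColouring (G := G) hk) :=
  ⟨toKColouring_injective hk,
    Function.LeftInverse.surjective (KColouring.toKColouring_toCliqueExtension hk)⟩

lemma card_cliqueExtension :
    Nat.card (CliqueExtension G α k) =
      ∑ s : Finset α, (k - #s).descFactorial (Fintype.card α - #s) * numColourings G (k - #s) := by
  classical
  rw [Nat.card_sigma]
  refine sum_congr rfl fun s _ => ?_
  have hemb (Q : KColouring G (k - #s)) : Nat.card ((sᶜ : Finset α) ↪ Q.1.parts) =
      (k - #s).descFactorial (Fintype.card α - #s) := by
    rw [Nat.card_eq_fintype_card, Fintype.card_embedding_eq, Fintype.card_coe, Fintype.card_coe,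
      Q.2.1, card_compl]
  rw [Nat.card_sigma, sum_congr rfl fun Q _ => hemb Q, sum_const, card_univ, smul_eq_mul,
    mul_comm, numColourings_eq_card_kColouring, Nat.card_eq_fintype_card]

theorem numColourings_sum_top (hk : Fintype.card α ≤ k) :
    numColourings (G ⊕g (⊤ : SimpleGraph α)) k =
      ∑ i ∈ range (Fintype.card α + 1), (Fintype.card α).choose i *
        (k - i).descFactorial (Fintype.card α - i) * numColourings G (k - i) := by
  rw [numColourings_eq_card_kColouring,
    ← Nat.card_eq_of_bijective _ (CliqueExtension.toKColouring_bijective hk),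
    card_cliqueExtension, ← powerset_univ, sum_powerset_apply_card
      (fun i => (k - i).descFactorial (Fintype.card α - i) * numColourings G (k - i)), card_univ]
  simp only [smul_eq_mul, mul_assoc]

end SumClique

def cliqueUnionSuccIso (N m : ℕ) :
    cliqueUnion (N + 1) m ≃g cliqueUnion N m ⊕g (⊤ : SimpleGraph (Fin m)) where
  toEquiv := ((Equiv.prodCongr (finSuccEquiv N) (Equiv.refl _)).trans
    optionProdEquiv).trans (Equiv.sumComm _ _)
  map_rel_iff' := by
    rintro ⟨i, a⟩ ⟨j, b⟩
    induction i using Fin.cases <;> induction j using Fin.cases <;>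
      simp [cliqueUnion, (Fin.succ_ne_zero _).symm]

theorem recurrence_for_colourings_of_clique_unions_general
    (m n k : ℕ) (hn : 2 ≤ n) (hk : m ≤ k) :
    numColourings (cliqueUnion n m) k =
      ∑ i ∈ Finset.range (m + 1),
        m.choose i * (k - i).descFactorial (m - i) *
          numColourings (cliqueUnion (n - 1) m) (k - i) := by
  obtain ⟨N, rfl⟩ : ∃ N, n = N + 1 := ⟨n - 1, by omega⟩
  rw [numColourings_congr (cliqueUnionSuccIso N m), Nat.add_sub_cancel]
  simpa using numColourings_sum_top (G := cliqueUnion N m) (α := Fin m) (by simpa using hk)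

theorem recurrence_for_colourings_of_clique_unions
    (m n k : ℕ) (hm : 1 ≤ m) (hn : 2 ≤ n) (hk : m ≤ k) :
    numColourings (cliqueUnion n m) k =
      ∑ i ∈ Finset.range (m + 1),
        m.choose i * (k - i).descFactorial (m - i) *
          numColourings (cliqueUnion (n - 1) m) (k - i) :=
  recurrence_for_colourings_of_clique_unions_general m n k hn hk
end

section
/- Define S_m(n,k) by the recurrence S_m(1,m)=1, S_m(1,k)=0 for k≠m, S_m(n,k)=0 for k<m, and S_m(n+1,k) = Σ_{p=0}^{m} C(k+p−m, p) · (m)_p · S_m(n, k+p−m) for n ≥ 1. Then for all positive integers m, n, k, S_m(n,k) equals the number of k-colourings of nK_m. -/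
open Finset

/-!
Both sides are determined by their falling-factorial transforms `a ↦ (k ↦ ∑ⱼ (k)ⱼ a j)`, which
are injective because the matrix `((k)ⱼ)` is triangular with diagonal `k!`.

A proper colouring of a graph with colours in `Fin k` is the same thing as a partition of the
vertices into stable sets together with an injective labelling of the parts, so the transform of
`j ↦ numColourings G j` counts the proper `Fin k`-colourings; for `nK_m` there are `((k)_m)^n`.

On the other side, counting pairs of injections `[i] → [k]`, `[m] → [k]` by the number `p` of
common values gives `∑ₚ C(i,p) (m)ₚ (k)_{i+m-p} = (k)ᵢ (k)ₘ`, which says that one step of the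
recurrence multiplies the transform by `(k)ₘ`. Since `S 1` has transform `(k)ₘ`, the transform of
`S n` is `((k)ₘ)^n` as well.
-/

theorem Nat.sum_choose_mul_descFactorial_mul_descFactorial (i m k : ℕ) :
    ∑ p ∈ range (m + 1), i.choose p * m.descFactorial p * k.descFactorial (i + m - p)
      = k.descFactorial i * k.descFactorial m := by
  rcases lt_or_ge k i with hki | hik
  · rw [Nat.descFactorial_of_lt hki, zero_mul]
    refine sum_eq_zero fun p hp => ?_
    rw [Nat.descFactorial_of_lt (n := k) (k := i + m - p) (by simp at hp; omega), mul_zero]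
  have vandermonde : ∑ p ∈ range (m + 1), i.choose p * (k - i).choose (m - p) = k.choose m := by
    rw [← Nat.add_sub_cancel' hik, Nat.add_choose_eq, Nat.sum_antidiagonal_eq_sum_range_succ_mk,
      Nat.add_sub_cancel_left]
  have term : ∀ p ∈ range (m + 1), i.choose p * m.descFactorial p * k.descFactorial (i + m - p)
      = k.descFactorial i * (m.factorial * (i.choose p * (k - i).choose (m - p))) := by
    intro p hp
    have hpm : p ≤ m := Nat.lt_succ_iff.1 (mem_range.1 hp)
    rw [← Nat.descFactorial_mul_descFactorial (show i ≤ i + m - p by omega),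
      show i + m - p - i = m - p by omega, Nat.descFactorial_eq_factorial_mul_choose (k - i),
      ← Nat.factorial_mul_descFactorial hpm]
    ring
  rw [sum_congr rfl term, ← mul_sum, ← mul_sum, vandermonde,
    ← Nat.descFactorial_eq_factorial_mul_choose]

theorem Nat.eq_of_sum_descFactorial_mul_eq {a b : ℕ → ℕ}
    (h : ∀ k, ∑ j ∈ range (k + 1), k.descFactorial j * a j
      = ∑ j ∈ range (k + 1), k.descFactorial j * b j) : a = b := by
  funext k
  induction k using Nat.strong_induction_on with
  | _ k ih =>
    have hk := h k
    rw [sum_range_succ, sum_range_succ,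
      sum_congr rfl fun j hj => by rw [ih j (mem_range.1 hj)], Nat.descFactorial_self] at hk
    exact Nat.eq_of_mul_eq_mul_left k.factorial_pos (Nat.add_left_cancel hk)

/-- The substitution `i = j + p - m`; the terms with `j + p < m`, where the truncated subtraction
gives `i = 0`, vanish because `s 0 = 0` when `0 < m`. -/
theorem sum_descFactorial_mul_shift_eq (m k : ℕ) (s : ℕ → ℕ) (hs : ∀ j < m, s j = 0) :
    ∑ x ∈ range (k + 1) ×ˢ range (m + 1), k.descFactorial x.1 *
        ((x.1 + x.2 - m).choose x.2 * m.descFactorial x.2 * s (x.1 + x.2 - m))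
      = ∑ x ∈ range (k + 1) ×ˢ range (m + 1),
          x.1.choose x.2 * m.descFactorial x.2 * k.descFactorial (x.1 + m - x.2) * s x.1 := by
  have le_add_of_ne_zero : ∀ x : ℕ × ℕ, k.descFactorial x.1 * ((x.1 + x.2 - m).choose x.2
      * m.descFactorial x.2 * s (x.1 + x.2 - m)) ≠ 0 → m ≤ x.1 + x.2 := by
    intro x hx
    by_contra hlt
    rw [show x.1 + x.2 - m = 0 by omega, hs 0 (by omega)] at hx
    simp at hx
  refine sum_bij_ne_zero (fun x _ _ => (x.1 + x.2 - m, x.2)) ?_ ?_ ?_ ?_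
  · simp only [mem_product, mem_range]
    omega
  · intro x _ hx y _ hy hxy
    have := le_add_of_ne_zero x hx
    have := le_add_of_ne_zero y hy
    simp only [Prod.ext_iff] at hxy ⊢
    omega
  · intro y hy hy0
    have hpi : y.2 ≤ y.1 := by
      by_contra h; simp [Nat.choose_eq_zero_of_lt (not_le.1 h)] at hy0
    have hjk : y.1 + m - y.2 ≤ k := by
      by_contra h; simp [Nat.descFactorial_of_lt (not_le.1 h)] at hy0
    simp only [mem_product, mem_range] at hy ⊢
    refine ⟨(y.1 + m - y.2, y.2), ⟨by omega, hy.2⟩, ?_, Prod.ext (by dsimp only; omega) rfl⟩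
    rw [show y.1 + m - y.2 + y.2 - m = y.1 by omega]
    convert hy0 using 1
    ring
  · intro x _ hx
    dsimp only
    rw [show x.1 + x.2 - m + m - x.2 = x.1 by have := le_add_of_ne_zero x hx; omega]
    ring

theorem sum_descFactorial_mul_recurrence (m : ℕ) (s : ℕ → ℕ) (hs : ∀ j < m, s j = 0) (k : ℕ) :
    ∑ j ∈ range (k + 1), k.descFactorial j *
        ∑ p ∈ range (m + 1), (j + p - m).choose p * m.descFactorial p * s (j + p - m)
      = k.descFactorial m * ∑ i ∈ range (k + 1), k.descFactorial i * s i := by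
  simp_rw [mul_sum]
  rw [← sum_product', sum_descFactorial_mul_shift_eq m k s hs, sum_product]
  refine sum_congr rfl fun i _ => ?_
  dsimp only
  rw [← sum_mul, Nat.sum_choose_mul_descFactorial_mul_descFactorial]
  ring

theorem sum_descFactorial_mul_eq_descFactorial_pow (m : ℕ) (S : ℕ → ℕ → ℕ)
    (h1 : S 1 m = 1)
    (h1' : ∀ k, k ≠ m → S 1 k = 0)
    (h0 : ∀ n k, k < m → S n k = 0)
    (hrec : ∀ n, 1 ≤ n → ∀ k,
      S (n + 1) k = ∑ p ∈ Finset.range (m + 1),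
        (k + p - m).choose p * m.descFactorial p * S n (k + p - m)) :
    ∀ n, 1 ≤ n → ∀ k, ∑ j ∈ range (k + 1), k.descFactorial j * S n j = k.descFactorial m ^ n := by
  intro n hn
  induction n, hn using Nat.le_induction with
  | base =>
    intro k
    rw [pow_one, sum_eq_single m (fun j _ hj => by rw [h1' j hj, mul_zero])
      (fun hmk => by rw [Nat.descFactorial_of_lt (by simpa using hmk), zero_mul]), h1, mul_one]
  | succ n hn ih =>
    intro k
    simp_rw [hrec n hn]
    rw [sum_descFactorial_mul_recurrence m (S n) (h0 n), ih, pow_succ, mul_comm]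

theorem Finpartition.eq_of_part_eq {V : Type*} [DecidableEq V] {s : Finset V}
    {P Q : Finpartition s} (h : ∀ v ∈ s, P.part v = Q.part v) : P = Q := by
  have parts_sub : ∀ {P Q : Finpartition s}, (∀ v ∈ s, P.part v = Q.part v) →
      P.parts ⊆ Q.parts := by
    intro P Q h t ht
    obtain ⟨v, hv⟩ := P.nonempty_of_mem_parts ht
    have hvs : v ∈ s := P.le ht hv
    rw [← P.part_eq_of_mem ht hv, h v hvs]
    exact Q.part_mem.2 hvs
  exact Finpartition.ext (subset_antisymm (parts_sub h) (parts_sub fun v hv => (h v hv).symm))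

section Colourings

variable {V α : Type*} [Fintype V] [DecidableEq V] {G : SimpleGraph V}

def IsColouring.coloring {P : Finpartition (univ : Finset V)} (hP : IsColouring G P)
    (ι : P.parts ↪ α) : G.Coloring α :=
  SimpleGraph.Coloring.mk (fun v => ι ⟨P.part v, P.part_mem.2 (mem_univ v)⟩) fun {v w} hvw h => by
    have hpart : P.part v = P.part w := congrArg Subtype.val (ι.injective h)
    exact hP _ (P.part_mem.2 (mem_univ v)) v (P.mem_part (mem_univ v)) w
      (hpart ▸ P.mem_part (mem_univ w)) hvw

def sigmaColoring :
    (Σ P : {P : Finpartition (univ : Finset V) // IsColouring G P}, P.1.parts ↪ α) →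
      G.Coloring α :=
  fun x => x.1.2.coloring x.2

theorem sigmaColoring_injective : Function.Injective (sigmaColoring (G := G) (α := α)) := by
  rintro ⟨⟨P, hP⟩, ι⟩ ⟨⟨Q, hQ⟩, κ⟩ h
  have hv : ∀ v, ι ⟨P.part v, _⟩ = κ ⟨Q.part v, _⟩ := fun v => DFunLike.congr_fun h v
  obtain rfl : P = Q := by
    refine Finpartition.eq_of_part_eq fun v _ => ?_
    ext w
    rw [P.mem_part_iff_part_eq_part (mem_univ w) (mem_univ v),
      Q.mem_part_iff_part_eq_part (mem_univ w) (mem_univ v), ← Subtype.mk.injEq _ _ _ _,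
      ← ι.apply_eq_iff_eq, hv, hv, κ.apply_eq_iff_eq, Subtype.mk.injEq]
    all_goals exact P.part_mem.2 (mem_univ _)
  refine Sigma.ext rfl (heq_of_eq (DFunLike.ext _ _ fun ⟨t, ht⟩ => ?_))
  obtain ⟨v, hvt⟩ := P.nonempty_of_mem_parts ht
  obtain rfl := P.part_eq_of_mem ht hvt
  exact hv v

theorem sigmaColoring_surjective : Function.Surjective (sigmaColoring (G := G) (α := α)) := by
  intro C
  classical
  set P := Finpartition.ofSetoid (Setoid.ker C)
  have mem_part : ∀ v w, w ∈ P.part v ↔ C v = C w := fun v w =>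
    Finpartition.mem_part_ofSetoid_iff_rel
  have hP : IsColouring G P := fun t ht v hv w hw hvw =>
    C.valid hvw ((mem_part v w).1 (P.part_eq_of_mem ht hv ▸ hw))
  let rep : P.parts → V := fun t => (P.nonempty_of_mem_parts t.2).choose
  have part_rep : ∀ t : P.parts, P.part (rep t) = t := fun t =>
    P.part_eq_of_mem t.2 (P.nonempty_of_mem_parts t.2).choose_spec
  have C_rep : ∀ v, C (rep ⟨P.part v, P.part_mem.2 (mem_univ v)⟩) = C v := fun v =>
    ((mem_part v _).1 (P.nonempty_of_mem_parts (P.part_mem.2 (mem_univ v))).choose_spec).symm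
  refine ⟨⟨⟨P, hP⟩, ⟨C ∘ rep, fun t u htu => ?_⟩⟩, DFunLike.ext _ _ C_rep⟩
  rw [← Subtype.coe_inj, ← part_rep t, ← part_rep u]
  exact (P.part_eq_of_mem (P.part_mem.2 (mem_univ _)) ((mem_part _ _).2 htu)).symm

theorem card_filter_card_parts_eq_numColourings (j : ℕ)
    [Fintype {P : Finpartition (univ : Finset V) // IsColouring G P}] :
    #{P : {P : Finpartition (univ : Finset V) // IsColouring G P} | #P.1.parts = j}
      = numColourings G j := by
  rw [numColourings, ← Nat.card_congr ((Equiv.subtypeSubtypeEquivSubtypeInter _ _).trans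
    (Equiv.subtypeEquivRight fun _ => and_comm)), Nat.card_eq_fintype_card, Fintype.card_subtype]

theorem natCard_coloring_fin_eq_sum (k : ℕ) :
    Nat.card (G.Coloring (Fin k))
      = ∑ j ∈ range (k + 1), k.descFactorial j * numColourings G j := by
  classical
  rw [← Nat.card_congr (Equiv.ofBijective _ ⟨sigmaColoring_injective, sigmaColoring_surjective⟩),
    Nat.card_sigma]
  simp_rw [Nat.card_eq_fintype_card, Fintype.card_embedding_eq, Fintype.card_coe,
    Fintype.card_fin]
  calc _ = ∑ P : {P : Finpartition (univ : Finset V) // IsColouring G P}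
        with #P.1.parts ∈ range (k + 1), k.descFactorial #P.1.parts := by
        refine (sum_filter_of_ne fun P _ hP => mem_range.2 ?_).symm
        by_contra h
        exact hP (Nat.descFactorial_of_lt (by omega))
    _ = _ := by
        rw [← sum_fiberwise_eq_sum_filter']
        refine sum_congr rfl fun j _ => ?_
        rw [sum_const, smul_eq_mul, mul_comm, card_filter_card_parts_eq_numColourings]

end Colourings

def cliqueUnionColoringEquiv (n m : ℕ) (α : Type*) :
    (cliqueUnion n m).Coloring α ≃ (Fin n → (Fin m ↪ α)) where
  toFun C i := ⟨fun a => C (i, a), fun a b hab => by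
    by_contra hne
    exact C.valid (show (cliqueUnion n m).Adj (i, a) (i, b) from ⟨rfl, hne⟩) hab⟩
  invFun F := SimpleGraph.Coloring.mk (fun x => F x.1 x.2) fun {x y} hxy h => by
    obtain ⟨hi, ha⟩ := hxy
    rw [hi] at h
    exact ha ((F y.1).injective h)
  left_inv _ := rfl
  right_inv _ := rfl

theorem natCard_coloring_cliqueUnion (n m k : ℕ) :
    Nat.card ((cliqueUnion n m).Coloring (Fin k)) = k.descFactorial m ^ n := by
  rw [Nat.card_congr (cliqueUnionColoringEquiv n m (Fin k)), Nat.card_fun,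
    Nat.card_eq_fintype_card, Fintype.card_embedding_eq, Nat.card_fin, Fintype.card_fin,
    Fintype.card_fin]

theorem blasiak_recurrence_counts_colourings_general (m : ℕ) (S : ℕ → ℕ → ℕ)
    (h1 : S 1 m = 1)
    (h1' : ∀ k, k ≠ m → S 1 k = 0)
    (h0 : ∀ n k, k < m → S n k = 0)
    (hrec : ∀ n, 1 ≤ n → ∀ k,
      S (n + 1) k = ∑ p ∈ Finset.range (m + 1),
        (k + p - m).choose p * m.descFactorial p * S n (k + p - m)) :
    ∀ n, 1 ≤ n → ∀ k, 1 ≤ k → S n k = numColourings (cliqueUnion n m) k := by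
  intro n hn k _
  have transforms_eq : ∀ K, ∑ j ∈ range (K + 1), K.descFactorial j * S n j
      = ∑ j ∈ range (K + 1), K.descFactorial j * numColourings (cliqueUnion n m) j := fun K => by
    rw [sum_descFactorial_mul_eq_descFactorial_pow m S h1 h1' h0 hrec n hn,
      ← natCard_coloring_fin_eq_sum, natCard_coloring_cliqueUnion]
  exact congrFun (Nat.eq_of_sum_descFactorial_mul_eq transforms_eq) k

theorem blasiak_recurrence_counts_colourings (m : ℕ) (hm : 1 ≤ m) (S : ℕ → ℕ → ℕ)
    (h1 : S 1 m = 1)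
    (h1' : ∀ k, k ≠ m → S 1 k = 0)
    (h0 : ∀ n k, k < m → S n k = 0)
    (hrec : ∀ n, 1 ≤ n → ∀ k,
      S (n + 1) k = ∑ p ∈ Finset.range (m + 1),
        (k + p - m).choose p * m.descFactorial p * S n (k + p - m)) :
    ∀ n, 1 ≤ n → ∀ k, 1 ≤ k → S n k = numColourings (cliqueUnion n m) k :=
  blasiak_recurrence_counts_colourings_general m S h1 h1' h0 hrec
end
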